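/- arXiv:0812.0435 — 2 statements merged into one kernel-verified Lean document; each statement's English description precedes it below -/
import Mathlib

section
/- Let λ, μ, ν be partitions contained in the k×(n−k) rectangle with μ ⊆ ν^∨, and let T be a Littlewood–Richardson tableau of shape ν^∨/μ and weight λ^∨. Then for all integers p ≥ 1 and m ≥ 1, the number of boxes of T with entry p lying in rows 1, …, p+m−1 is at most n−k−μ_m (where μ_m = 0 if m exceeds the number of parts of μ). -/
open scoped ENat

/-- A diagram: a finite set of boxes `(i, j)` (row `i` from the top, column `j` from the left). -/
abbrev Dg := Finset (ℕ × ℕ)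

/-- The set of column indices of boxes in row `i` of `D`. -/
def row (D : Dg) (i : ℕ) : Finset ℕ := (D.filter (fun b => b.1 = i)).image Prod.snd

/-- `l_i`: the least column index in row `i`, with the convention `l_i = ∞` for an empty row. -/
noncomputable def lRow (D : Dg) (i : ℕ) : ℕ∞ := (row D i).inf (fun j => (j : ℕ∞))

/-- `r_i`: the greatest column index in row `i`, with the convention `r_i = 0` for an empty row. -/
def rRow (D : Dg) (i : ℕ) : ℕ := (row D i).sup id

/-- Index `i ≥ 2` with `l_{i-1} > l_i`. -/
def Violation (D : Dg) (i : ℕ) : Prop := 2 ≤ i ∧ lRow D i < lRow D (i - 1)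

/-- `i` is the maximum index with `l_{i-1} > l_i`. -/
def MaxViolation (D : Dg) (i : ℕ) : Prop := Violation D i ∧ ∀ i', Violation D i' → i' ≤ i

/-- No index `i ≥ 2` has `l_{i-1} > l_i`. -/
def TerminalD (D : Dg) : Prop := ∀ i, ¬ Violation D i

/-- Step A is permitted at row `i`: `l_{i-1} > l_i` and (`r_i ≥ l_{i-1} - 1` or row `i-1` empty). -/
def StepAOk (D : Dg) (i : ℕ) : Prop :=
  Violation D i ∧ (lRow D (i - 1) - 1 ≤ (rRow D i : ℕ∞) ∨ row D (i - 1) = ∅)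

/-- `l_i ≤ q < l_{i-1}`: the columns affected by Step A at row `i`. -/
def InL (D : Dg) (i q : ℕ) : Prop := lRow D i ≤ (q : ℕ∞) ∧ (q : ℕ∞) < lRow D (i - 1)

/-- `D'` is the result of performing Step A on `D` at row `i`: for each column
`l_i ≤ q < l_{i-1}`, membership of `(i, q)` and `(i-1, q)` is exchanged. -/
def IsStepA (D D' : Dg) (i : ℕ) : Prop :=
  ∀ p q : ℕ,
    (p = i → InL D i q → ((p, q) ∈ D' ↔ (i - 1, q) ∈ D)) ∧
    (p = i - 1 → InL D i q → ((p, q) ∈ D' ↔ (i, q) ∈ D)) ∧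
    (¬((p = i ∨ p = i - 1) ∧ InL D i q) → ((p, q) ∈ D' ↔ (p, q) ∈ D))

/-- Step B is permitted at row `i`: `l_{i-1} > l_i` and `r_i ≤ r_{i-1} - 1`. -/
def StepBOk (D : Dg) (i : ℕ) : Prop :=
  Violation D i ∧ rRow D i ≤ rRow D (i - 1) - 1

/-- The rows affected by Step B at row `i`: rows `p ≥ i` with `l_p = l_i`. -/
def BRow (D : Dg) (i p : ℕ) : Prop := i ≤ p ∧ lRow D p = lRow D i

/-- `D'` is the result of performing Step B on `D` at row `i`: in each row `p ≥ i` with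
`l_p = l_i`, the box `(p, l_p)` is removed and the box `(p, r_p + 1)` is added. -/
def IsStepB (D D' : Dg) (i : ℕ) : Prop :=
  ∀ p q : ℕ,
    (BRow D i p →
      ((p, q) ∈ D' ↔ (((p, q) ∈ D ∧ (q : ℕ∞) ≠ lRow D p) ∨ q = rRow D p + 1))) ∧
    (¬ BRow D i p → ((p, q) ∈ D' ↔ (p, q) ∈ D))

/-- One step of Algorithm 1: at the maximum index `i` with `l_{i-1} > l_i`, perform a
permitted Step A or Step B. -/
def AlgStep (D D' : Dg) : Prop :=
  ∃ i, MaxViolation D i ∧ ((StepAOk D i ∧ IsStepA D D' i) ∨ (StepBOk D i ∧ IsStepB D D' i))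

/-- An execution of Algorithm 1 starting from `D0`: a finite sequence of diagrams beginning
at `D0`, each obtained from the previous by a step of Algorithm 1, ending at a terminal
diagram. -/
def IsExec (D0 : Dg) (L : List Dg) : Prop :=
  L.head? = some D0 ∧ L.Chain' AlgStep ∧ ∀ Dl, L.getLast? = some Dl → TerminalD Dl

/-- The indices of nonempty rows of `D`, from top to bottom. -/
def rowIdx (D : Dg) : List ℕ := (D.image Prod.fst).sort (· ≤ ·)

/-- The lengths of the nonempty rows of `D`, read from top to bottom. -/
def rowLengths (D : Dg) : List ℕ := (rowIdx D).map (fun p => (row D p).card)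

/-- The execution `L` terminates at a diagram whose nonempty rows, read from top to bottom,
have lengths `ν 1, ν 2, …`. -/
def EndsAt (L : List Dg) (ν : ℕ → ℕ) : Prop :=
  ∃ Dl, L.getLast? = some Dl ∧ ∀ m : ℕ, (rowLengths Dl).getD m 0 = ν (m + 1)

/-- A partition, written as a weakly decreasing function on indices `1, 2, …`. -/
def IsPartition (f : ℕ → ℕ) : Prop := f 0 = 0 ∧ ∀ p, 1 ≤ p → f (p + 1) ≤ f p

/-- The partition `f` is contained in the `k × w` rectangle. -/
def InRect (f : ℕ → ℕ) (k w : ℕ) : Prop := (∀ p, k < p → f p = 0) ∧ ∀ p, f p ≤ w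

/-- The skew Young diagram `lam / mu` (boxes of `lam` not in `mu`), rows `1, …, k`. -/
def skewD (lam mu : ℕ → ℕ) (k : ℕ) : Dg :=
  (Finset.Icc 1 k).biUnion (fun p => (Finset.Icc (mu p + 1) (lam p)).image (fun q => (p, q)))

/-- `lam^∨`, the complementary partition of `lam` inside the `k × w` rectangle. -/
def dualP (lam : ℕ → ℕ) (k w : ℕ) : ℕ → ℕ :=
  fun p => if 1 ≤ p ∧ p ≤ k then w - lam (k + 1 - p) else 0

/-- `f` is a semistandard filling of the (finite) shape `S`: entries are positive,
rows weakly increase left to right, columns strictly increase top to bottom. -/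
def SSYTF (S : Dg) (f : ℕ × ℕ → ℕ) : Prop :=
  (∀ b ∈ S, 1 ≤ f b) ∧
  (∀ i j j', (i, j) ∈ S → (i, j') ∈ S → j ≤ j' → f (i, j) ≤ f (i, j')) ∧
  (∀ i i' j, (i, j) ∈ S → (i', j) ∈ S → i < i' → f (i, j) < f (i', j))

/-- The reverse reading word of the filling `f` of `S` (rows top to bottom, each row right
to left) is a ballot sequence: in the prefix ending at any box `b`, there are at least as
many occurrences of `p` as of `p + 1`, for every `p ≥ 1`. -/
def BallotF (S : Dg) (f : ℕ × ℕ → ℕ) : Prop :=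
  ∀ p, 1 ≤ p → ∀ b ∈ S,
    (S.filter (fun c => (c.1 < b.1 ∨ (c.1 = b.1 ∧ b.2 ≤ c.2)) ∧ f c = p + 1)).card ≤
      (S.filter (fun c => (c.1 < b.1 ∨ (c.1 = b.1 ∧ b.2 ≤ c.2)) ∧ f c = p)).card

/-- `f` is a Littlewood–Richardson tableau of shape `S` (zero outside `S`). -/
def LRTabF (S : Dg) (f : ℕ × ℕ → ℕ) : Prop :=
  (∀ b, b ∉ S → f b = 0) ∧ SSYTF S f ∧ BallotF S f

lemma mem_skewD' {lam mu : ℕ → ℕ} {k i j : ℕ} :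
    (i, j) ∈ skewD lam mu k ↔ (1 ≤ i ∧ i ≤ k) ∧ (mu i + 1 ≤ j ∧ j ≤ lam i) := by
  simp only [skewD, Finset.mem_biUnion, Finset.mem_image, Finset.mem_Icc]
  constructor
  · rintro ⟨p, ⟨hp1, hpk⟩, q, ⟨hq1, hq2⟩, heq⟩
    obtain ⟨rfl, rfl⟩ : p = i ∧ q = j := by
      constructor <;> [exact congrArg Prod.fst heq; exact congrArg Prod.snd heq]
    exact ⟨⟨hp1, hpk⟩, hq1, hq2⟩
  · rintro ⟨⟨h1, h2⟩, h3, h4⟩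
    exact ⟨i, ⟨h1, h2⟩, j, ⟨h3, h4⟩, rfl⟩

lemma partition_anti {g : ℕ → ℕ} (hg : IsPartition g) {a b : ℕ} (ha : 1 ≤ a) (hab : a ≤ b) :
    g b ≤ g a := by
  induction b with
  | zero => omega
  | succ b ih =>
    rcases Nat.lt_or_ge a (b + 1) with h | h
    · exact le_trans (hg.2 b (by omega)) (ih (by omega))
    · have : a = b + 1 := by omega
      subst this; exact le_rfl

lemma dualP_le (nu : ℕ → ℕ) (k w p : ℕ) : dualP nu k w p ≤ w := by
  unfold dualP; split <;> omega

/-- Key step: in a tableau with weakly increasing rows whose reverse reading word is a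
ballot sequence, the number of `(p+1)`-entries in rows `1..r+1` is at most the number of
`p`-entries in rows `1..r`. -/
lemma ballot_step {S : Dg} {f : ℕ × ℕ → ℕ}
    (hrow : ∀ i j j', (i, j) ∈ S → (i, j') ∈ S → j ≤ j' → f (i, j) ≤ f (i, j'))
    (hballot : BallotF S f) (p r : ℕ) (hp : 1 ≤ p) :
    (S.filter (fun b => f b = p + 1 ∧ b.1 ≤ r + 1)).card ≤
      (S.filter (fun b => f b = p ∧ b.1 ≤ r)).card := by
  set P := S.filter (fun b => f b = p + 1 ∧ b.1 ≤ r + 1) with hP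
  rcases P.eq_empty_or_nonempty with hPe | hPne
  · simp [hPe]
  · -- bm : box of maximal row index in P
    obtain ⟨bm, hbmP, hbmax⟩ := P.exists_max_image (fun b => b.1) hPne
    set T := P.filter (fun b => b.1 = bm.1) with hT
    have hTne : T.Nonempty := ⟨bm, by simp [hT, hbmP]⟩
    obtain ⟨b0, hb0T, hbmin⟩ := T.exists_min_image (fun b => b.2) hTne
    have hb0P : b0 ∈ P := (Finset.mem_filter.mp hb0T).1
    have hb0row : b0.1 = bm.1 := (Finset.mem_filter.mp hb0T).2
    have hb0S : b0 ∈ S := (Finset.mem_filter.mp hb0P).1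
    have hb0f : f b0 = p + 1 := (Finset.mem_filter.mp hb0P).2.1
    have hb0r : b0.1 ≤ r + 1 := (Finset.mem_filter.mp hb0P).2.2
    have hb := hballot p hp b0 hb0S
    have h1 : P ⊆ S.filter (fun c => (c.1 < b0.1 ∨ (c.1 = b0.1 ∧ b0.2 ≤ c.2)) ∧ f c = p + 1) := by
      intro c hc
      have hcS : c ∈ S := (Finset.mem_filter.mp hc).1
      have hcf : f c = p + 1 := (Finset.mem_filter.mp hc).2.1
      have hcle : c.1 ≤ bm.1 := hbmax c hc
      refine Finset.mem_filter.mpr ⟨hcS, ?_, hcf⟩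
      rcases Nat.lt_or_ge c.1 b0.1 with h | h
      · exact Or.inl h
      · have hceq : c.1 = b0.1 := by omega
        have hcT : c ∈ T := Finset.mem_filter.mpr ⟨hc, by omega⟩
        exact Or.inr ⟨hceq, hbmin c hcT⟩
    have h2 : S.filter (fun c => (c.1 < b0.1 ∨ (c.1 = b0.1 ∧ b0.2 ≤ c.2)) ∧ f c = p) ⊆
        S.filter (fun b => f b = p ∧ b.1 ≤ r) := by
      intro c hc
      have hcS : c ∈ S := (Finset.mem_filter.mp hc).1
      have hcf : f c = p := (Finset.mem_filter.mp hc).2.2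
      rcases (Finset.mem_filter.mp hc).2.1 with h | ⟨heq, hle⟩
      · exact Finset.mem_filter.mpr ⟨hcS, hcf, by omega⟩
      · exfalso
        have hb0' : (c.1, b0.2) ∈ S := by
          have : (c.1, b0.2) = b0 := by
            rw [heq]
          rw [this]; exact hb0S
        have := hrow c.1 b0.2 c.2 hb0' (by simpa using hcS) hle
        have hfb0 : f (c.1, b0.2) = p + 1 := by
          have : (c.1, b0.2) = b0 := by rw [heq]
          rw [this]; exact hb0f
        simp only [Prod.mk.eta] at this
        omega
    calc P.card ≤ _ := Finset.card_le_card h1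
      _ ≤ _ := hb
      _ ≤ _ := Finset.card_le_card h2

/-- In a Littlewood–Richardson tableau of shape `nu^∨ / mu` and weight
`lam^∨` (all partitions inside the `k × (n-k)` rectangle), for all `p, m ≥ 1` the number
of boxes with entry `p` lying in rows `1, …, p + m - 1` is at most `n - k - mu m`. -/
theorem statement9 (n k : ℕ) (hk : 1 ≤ k) (hkn : k ≤ n)
    (lam mu nu : ℕ → ℕ)
    (hlam : IsPartition lam) (hmu : IsPartition mu) (hnu : IsPartition nu)
    (hlamR : InRect lam k (n - k)) (hmuR : InRect mu k (n - k)) (hnuR : InRect nu k (n - k))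
    (hsub : ∀ p, mu p ≤ dualP nu k (n - k) p)
    (f : ℕ × ℕ → ℕ)
    (hLR : LRTabF (skewD (dualP nu k (n - k)) mu k) f)
    (hwt : ∀ p, 1 ≤ p →
      ((skewD (dualP nu k (n - k)) mu k).filter (fun b => f b = p)).card =
        dualP lam k (n - k) p) :
    ∀ p m : ℕ, 1 ≤ p → 1 ≤ m →
      ((skewD (dualP nu k (n - k)) mu k).filter
          (fun b => f b = p ∧ b.1 ≤ p + m - 1)).card ≤ n - k - mu m := by
  intro p m hp hm
  set S := skewD (dualP nu k (n - k)) mu k with hS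
  obtain ⟨hzero, ⟨hpos, hrow, hcol⟩, hballot⟩ := hLR
  -- Step 1: chain the ballot inequality down to entry 1.
  have chain : ∀ q, 1 ≤ q →
      (S.filter (fun b => f b = q ∧ b.1 ≤ q + m - 1)).card ≤
        (S.filter (fun b => f b = 1 ∧ b.1 ≤ m)).card := by
    intro q hq
    induction q with
    | zero => omega
    | succ q ih =>
      rcases Nat.lt_or_ge 1 (q + 1) with h | h
      · have hq1 : 1 ≤ q := by omega
        have step := ballot_step hrow hballot q (q + m - 1) hq1
        have heq : q + 1 + m - 1 = (q + m - 1) + 1 := by omega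
        rw [heq]
        exact le_trans step (ih hq1)
      · have : q = 0 := by omega
        subst this; simp
  -- Step 2: entry-1 boxes in rows `1..m` occupy distinct columns in `[mu m + 1, n-k]`.
  have base : (S.filter (fun b => f b = 1 ∧ b.1 ≤ m)).card ≤ n - k - mu m := by
    have hinj : Set.InjOn (fun b : ℕ × ℕ => b.2)
        ↑(S.filter (fun b => f b = 1 ∧ b.1 ≤ m)) := by
      intro a ha b hb hab
      replace hab : a.2 = b.2 := hab
      simp only [Finset.coe_filter, Set.mem_setOf_eq] at ha hb
      obtain ⟨haS, haf, _⟩ := ha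
      obtain ⟨hbS, hbf, _⟩ := hb
      by_contra hne
      have hrowne : a.1 ≠ b.1 := by
        intro h
        exact hne (Prod.ext h hab)
      have heb : (b.1, a.2) = b := Prod.ext rfl hab
      have hea : (a.1, b.2) = a := Prod.ext rfl hab.symm
      rcases Nat.lt_or_ge a.1 b.1 with h | h
      · have := hcol a.1 b.1 a.2 (by simpa using haS) (heb ▸ hbS) h
        simp only [Prod.mk.eta, heb] at this
        omega
      · have hlt : b.1 < a.1 := by omega
        have := hcol b.1 a.1 b.2 (by simpa using hbS) (hea ▸ haS) hlt
        simp only [Prod.mk.eta, hea] at this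
        omega
    have hmaps : ∀ b ∈ S.filter (fun b => f b = 1 ∧ b.1 ≤ m),
        b.2 ∈ Finset.Icc (mu m + 1) (n - k) := by
      intro b hb
      simp only [Finset.mem_filter] at hb
      obtain ⟨hbS, _, hbm⟩ := hb
      have hmem : (1 ≤ b.1 ∧ b.1 ≤ k) ∧
          (mu b.1 + 1 ≤ b.2 ∧ b.2 ≤ dualP nu k (n - k) b.1) := by
        rw [hS] at hbS
        have : (b.1, b.2) ∈ skewD (dualP nu k (n - k)) mu k := by simpa using hbS
        exact mem_skewD'.mp this
      obtain ⟨⟨hb1, hbk⟩, hcl, hcu⟩ := hmem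
      have hmu : mu m ≤ mu b.1 := partition_anti hmu hb1 hbm
      have hnk : dualP nu k (n - k) b.1 ≤ n - k := dualP_le nu k (n - k) b.1
      rw [Finset.mem_Icc]
      omega
    calc (S.filter (fun b => f b = 1 ∧ b.1 ≤ m)).card
        ≤ (Finset.Icc (mu m + 1) (n - k)).card :=
          Finset.card_le_card_of_injOn (fun b => b.2) hmaps hinj
      _ = n - k - mu m := by rw [Nat.card_Icc]; omega
  exact le_trans (chain p hp) base
end

section
/- Let D be an almost skew diagram, let i be the maximum index with l_{i−1} > l_i, and suppose Step B is permitted at row i (r_i ≤ r_{i−1} − 1). Let D^B be the result of performing Step B at row i, with ψ the induced row-preserving bijection from the boxes of D to the boxes of D^B and all elements associated to D^B regarded in ℂ[Σ_D] via ψ. Then for every σ ∈ C_D with σ ∉ C_{D^B}, the product C(D^B)·σ·R(D) equals 0 in ℂ[Σ_D]. -/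
/-!
For `σ ∈ C_D`, the product `C(D^B) σ R(D)` vanishes as soon as two distinct boxes of one row of
`D` are sent by `σ` into one column of `D^B`: the transposition `t` of these boxes is absorbed by
`R(D)`, while `σ t σ⁻¹` is odd and absorbed by `C(D^B)`, so the product equals its negative.

Such boxes exist when `σ ∉ C_{D^B}`. Let `L = l_i`. As `i` is the last descent of `l`, the boxes
moved by Step B are exactly the column-`L` boxes of rows `p ≥ i`, which go to column `r_p + 1`.
If `σ` sent a column-`L` box `b` to a row `q ≥ i` with `r_q < r_{row b}`, then by row convexity
`(row b, r_q + 1)` is a box, and `σ` sends it to column `r_q + 1`, the new column of `σ b`.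
With `r_i < r_{i-1}` this also keeps the column-`L` boxes of rows `< i` in rows `< i`. So `σ`
permutes the column-`L` boxes of rows `≥ i` without decreasing the end of their row, hence
preserves it, and `σ ∈ C_{D^B}`.
-/

open scoped ENat

/-- `D` is row convex. -/
def RowConvex (D : Dg) : Prop :=
  ∀ i j j' j'', (i, j) ∈ D → (i, j') ∈ D → j ≤ j'' → j'' ≤ j' → (i, j'') ∈ D

/-- `l` is weakly increasing on positions `s, s+1, …, t`. -/
def MonoL (l : ℕ → ℕ∞) (s t : ℕ) : Prop := ∀ p q, s ≤ p → p ≤ q → q ≤ t → l p ≤ l q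

/-- `l` is weakly decreasing on positions `s, s+1, …, t`. -/
def AntiL (l : ℕ → ℕ∞) (s t : ℕ) : Prop := ∀ p q, s ≤ p → p ≤ q → q ≤ t → l q ≤ l p

/-- The sequence `(l_1, …, l_k)` of leftmost column indices of `D` has, for some indices
`1 ≤ a ≤ i ≤ k`, either the form `l_i ≤ l_{i+1} ≤ … ≤ l_k ≤ l_{i-1} ≤ l_{i-2} ≤ … ≤ l_1`,
or the form
`l_a ≤ … ≤ l_{i-2} ≤ l_i ≤ … ≤ l_k ≤ l_{i-1} ≤ l_{a-1} ≤ … ≤ l_1`. -/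
def LShape (D : Dg) (k : ℕ) : Prop :=
  ∃ a i, 1 ≤ a ∧ a ≤ i ∧ i ≤ k ∧
    ((MonoL (lRow D) i k ∧ (2 ≤ i → lRow D k ≤ lRow D (i - 1)) ∧ AntiL (lRow D) 1 (i - 1)) ∨
     (2 ≤ i ∧ MonoL (lRow D) a (i - 2) ∧ (a ≤ i - 2 → lRow D (i - 2) ≤ lRow D i) ∧
      MonoL (lRow D) i k ∧ lRow D k ≤ lRow D (i - 1) ∧
      (2 ≤ a → lRow D (i - 1) ≤ lRow D (a - 1)) ∧ AntiL (lRow D) 1 (a - 1)))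

/-- `D` is almost skew with nonempty rows exactly `1, …, k`: it is row convex, its `r_i`
are weakly decreasing, and its `l_i` satisfy one of the two inequality chains above. -/
def AlmostSkew (D : Dg) (k : ℕ) : Prop :=
  (∀ p, (row D p).Nonempty ↔ 1 ≤ p ∧ p ≤ k) ∧
  RowConvex D ∧
  (∀ p q, 1 ≤ p → p ≤ q → q ≤ k → rRow D q ≤ rRow D p) ∧
  LShape D k

/-- The sum `Σ σ` over all permutations preserving the value of `g` (e.g. the row or the
column of every box), in the group algebra `ℂ[Perm α]`. -/
noncomputable def Rsum {α : Type} [Fintype α] [DecidableEq α] (g : α → ℕ) :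
    MonoidAlgebra ℂ (Equiv.Perm α) :=
  ∑ σ ∈ Finset.univ.filter (fun σ : Equiv.Perm α => ∀ b, g (σ b) = g b),
    MonoidAlgebra.single σ 1

/-- The signed sum `Σ sgn(σ)·σ` over all permutations preserving the value of `g`, in the
group algebra `ℂ[Perm α]`. -/
noncomputable def Csum {α : Type} [Fintype α] [DecidableEq α] (g : α → ℕ) :
    MonoidAlgebra ℂ (Equiv.Perm α) :=
  ∑ σ ∈ Finset.univ.filter (fun σ : Equiv.Perm α => ∀ b, g (σ b) = g b),
    MonoidAlgebra.single σ ((Equiv.Perm.sign σ : ℤ) : ℂ)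

lemma apply_swap_eq_of_eq {α β : Sort*} [DecidableEq α] (g : α → β) {a b : α}
    (h : g a = g b) (x : α) :
    g (Equiv.swap a b x) = g x := by
  rw [Equiv.swap_apply_def]
  split_ifs with ha hb
  · rw [ha, h]
  · rw [hb, h]
  · rfl

section GroupAlgebra

open MonoidAlgebra

variable {α : Type} [Fintype α] [DecidableEq α]

lemma Csum_mul_single_of_sign_eq_neg_one (g : α → ℕ) {τ : Equiv.Perm α}
    (hτ : ∀ b, g (τ b) = g b) (hsign : Equiv.Perm.sign τ = -1) :
    Csum g * single τ (1 : ℂ) = -Csum g := by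
  unfold Csum
  rw [Finset.sum_mul, ← Finset.sum_neg_distrib]
  refine Finset.sum_equiv (Equiv.mulRight τ) (fun ρ => ?_) (fun ρ _ => ?_)
  · simp only [Finset.mem_filter, Finset.mem_univ, true_and, Equiv.coe_mulRight,
      Equiv.Perm.mul_apply]
    refine ⟨fun h b => by rw [h, hτ], fun h b => ?_⟩
    have := h (τ.symm b)
    rwa [Equiv.apply_symm_apply, ← hτ (τ.symm b), Equiv.apply_symm_apply] at this
  · rw [Equiv.coe_mulRight, single_mul_single, mul_one, ← single_neg,
      Equiv.Perm.sign_mul, hsign]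
    simp

lemma single_mul_Rsum (h : α → ℕ) {t : Equiv.Perm α} (ht : ∀ b, h (t b) = h b) :
    single t (1 : ℂ) * Rsum h = Rsum h := by
  unfold Rsum
  rw [Finset.mul_sum]
  refine Finset.sum_equiv (Equiv.mulLeft t) (fun ρ => ?_) (fun ρ _ => ?_)
  · simp only [Finset.mem_filter, Finset.mem_univ, true_and, Equiv.coe_mulLeft,
      Equiv.Perm.mul_apply, ht]
  · rw [Equiv.coe_mulLeft, single_mul_single, one_mul]

lemma Csum_mul_single_mul_Rsum_eq_zero (g h : α → ℕ) (σ : Equiv.Perm α) {b₁ b₂ : α}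
    (hne : b₁ ≠ b₂) (hrow : h b₁ = h b₂) (hcol : g (σ b₁) = g (σ b₂)) :
    Csum g * single σ (1 : ℂ) * Rsum h = 0 := by
  set X := Csum g * single σ (1 : ℂ) * Rsum h
  have hconj : single σ (1 : ℂ) * single (Equiv.swap b₁ b₂) 1 =
      single (Equiv.swap (σ b₁) (σ b₂)) 1 * single σ 1 := by
    rw [single_mul_single, single_mul_single,
      Equiv.swap_apply_apply, inv_mul_cancel_right]
  have hneg : X = -X :=
    calc X = Csum g * single σ 1 * (single (Equiv.swap b₁ b₂) 1 * Rsum h) := by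
          rw [single_mul_Rsum h (apply_swap_eq_of_eq h hrow)]
      _ = Csum g * (single σ 1 * single (Equiv.swap b₁ b₂) 1) * Rsum h := by
          simp only [mul_assoc]
      _ = Csum g * single (Equiv.swap (σ b₁) (σ b₂)) 1 * single σ 1 * Rsum h := by
          rw [hconj]; simp only [mul_assoc]
      _ = -X := by
          rw [Csum_mul_single_of_sign_eq_neg_one g (apply_swap_eq_of_eq g hcol)
            (Equiv.Perm.sign_swap (σ.injective.ne hne)), neg_mul, neg_mul]
  have htwo : (2 : ℂ) • X = 0 := by
    rw [two_smul]
    nth_rewrite 1 [hneg]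
    exact neg_add_cancel X
  exact (smul_eq_zero.mp htwo).resolve_left two_ne_zero

end GroupAlgebra

lemma Equiv.Perm.finset_map_eq_of_mapsTo {α : Type*} {σ : Equiv.Perm α} {s : Finset α}
    (hs : ∀ a ∈ s, σ a ∈ s) : s.map σ.toEmbedding = s :=
  Finset.map_eq_of_subset fun _ hb => by
    obtain ⟨c, hc, rfl⟩ := Finset.mem_map.1 hb
    exact hs c hc

lemma Equiv.Perm.mem_of_apply_mem {α : Type*} {σ : Equiv.Perm α} {s : Finset α}
    (hs : ∀ a ∈ s, σ a ∈ s) {a : α} (ha : σ a ∈ s) : a ∈ s := by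
  rw [← σ.finset_map_eq_of_mapsTo hs] at ha
  simpa using ha

lemma Equiv.Perm.apply_eq_of_le_apply {α M : Type*} [AddCommMonoid M] [PartialOrder M]
    [IsOrderedCancelAddMonoid M] {σ : Equiv.Perm α} {s : Finset α}
    (hs : ∀ a ∈ s, σ a ∈ s) {f : α → M} (hf : ∀ a ∈ s, f a ≤ f (σ a)) :
    ∀ a ∈ s, f a = f (σ a) := by
  refine (Finset.sum_eq_sum_iff_of_le hf).1 ?_
  conv_lhs => rw [← σ.finset_map_eq_of_mapsTo hs]
  rw [Finset.sum_map]
  rfl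

section Diagram

variable {D : Dg}

lemma mem_row {p j : ℕ} : j ∈ row D p ↔ (p, j) ∈ D := by
  simp [row]

lemma lRow_le {p j : ℕ} (h : (p, j) ∈ D) : lRow D p ≤ j :=
  Finset.inf_le (mem_row.2 h)

lemma le_rRow {p j : ℕ} (h : (p, j) ∈ D) : j ≤ rRow D p :=
  Finset.le_sup (f := id) (mem_row.2 h)

lemma rRow_mem {p : ℕ} (hne : (row D p).Nonempty) : (p, rRow D p) ∈ D := by
  obtain ⟨j, hj, hjeq⟩ := Finset.exists_mem_eq_sup (row D p) hne id
  rw [rRow, hjeq]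
  exact mem_row.1 hj

lemma row_nonempty_of_lRow_ne_top {p : ℕ} (h : lRow D p ≠ ⊤) : (row D p).Nonempty := by
  contrapose! h
  rw [lRow, h, Finset.inf_empty]

lemma lRow_le_lRow_of_maxViolation {i p : ℕ} (hmax : MaxViolation D i) (hp : i ≤ p) :
    lRow D i ≤ lRow D p := by
  induction p, hp using Nat.le_induction with
  | base => exact le_rfl
  | succ n hin ih =>
    refine ih.trans (not_lt.1 fun hlt => ?_)
    have := hmax.2 (n + 1) ⟨by have := hmax.1.1; omega, by simpa using hlt⟩
    omega

lemma rRow_lt_rRow_of_stepBOk {k i : ℕ}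
    (hrows : ∀ p, (row D p).Nonempty ↔ 1 ≤ p ∧ p ≤ k) (h : StepBOk D i) :
    rRow D i < rRow D (i - 1) := by
  obtain ⟨⟨h2i, hlt⟩, hr⟩ := h
  have hik : i ≤ k := ((hrows i).1 (row_nonempty_of_lRow_ne_top hlt.ne_top)).2
  obtain ⟨j, hj⟩ := (hrows (i - 1)).2 ⟨by omega, by omega⟩
  have hjpos : 0 < j := by
    have : (0 : ℕ∞) < j := zero_le.trans_lt (hlt.trans_le (lRow_le (mem_row.1 hj)))
    exact_mod_cast this
  have := le_rRow (mem_row.1 hj)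
  omega

/-- The column of `ψ b` in the diagram obtained by Step B at row `i`. -/
noncomputable def stepBCol (D : Dg) (i : ℕ) (b : ℕ × ℕ) : ℕ :=
  if i ≤ b.1 ∧ lRow D b.1 = lRow D i ∧ (b.2 : ℕ∞) = lRow D b.1 then rRow D b.1 + 1
  else b.2

variable {i L : ℕ}

lemma stepBCol_of_snd_eq (hmax : MaxViolation D i) (hL : lRow D i = L) {p j : ℕ}
    (hb : (p, j) ∈ D) (hi : i ≤ p) (hj : j = L) : stepBCol D i (p, j) = rRow D p + 1 := by
  have hl : lRow D p = L :=
    le_antisymm (hj ▸ lRow_le hb) (hL ▸ lRow_le_lRow_of_maxViolation hmax hi)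
  exact if_pos ⟨hi, hl.trans hL.symm, by rw [hl, hj]⟩

lemma stepBCol_of_snd_ne (hL : lRow D i = L) {b : ℕ × ℕ} (hb : b.2 ≠ L) :
    stepBCol D i b = b.2 :=
  if_neg fun ⟨_, h1, h2⟩ => hb (by exact_mod_cast h2.trans (h1.trans hL))

lemma stepBCol_of_fst_lt {b : ℕ × ℕ} (hb : b.1 < i) : stepBCol D i b = b.2 :=
  if_neg fun ⟨h, _⟩ => absurd h (not_le.2 hb)

variable {σ : Equiv.Perm {x : ℕ × ℕ // x ∈ D}}

lemma rRow_le_rRow_apply_of_injective (hconvex : RowConvex D) (hmax : MaxViolation D i)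
    (hL : lRow D i = L) (hσC : ∀ b, (σ b).val.2 = b.val.2)
    (hinj : Function.Injective fun b => (b.val.1, stepBCol D i (σ b).val))
    {b : {x : ℕ × ℕ // x ∈ D}} (hcol : b.val.2 = L) (hi : i ≤ (σ b).val.1) :
    rRow D b.val.1 ≤ rRow D (σ b).val.1 := by
  by_contra! hlt
  set r := rRow D (σ b).val.1
  have hσmem : ((σ b).val.1, L) ∈ D := by
    rw [← hcol, ← hσC b]
    exact (σ b).2
  have hLr : L ≤ r := le_rRow hσmem
  have hbmem : (b.val.1, L) ∈ D := by
    rw [← hcol]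
    exact b.2
  have hb' : (b.val.1, r + 1) ∈ D :=
    hconvex _ _ _ _ hbmem (rRow_mem ⟨_, mem_row.2 hbmem⟩) (by omega) hlt
  have hσb : stepBCol D i (σ b).val = r + 1 :=
    stepBCol_of_snd_eq hmax hL (σ b).2 hi (by rw [hσC b, hcol])
  have hσb' : stepBCol D i (σ ⟨_, hb'⟩).val = r + 1 := by
    rw [stepBCol_of_snd_ne hL (by rw [hσC]; dsimp only; omega), hσC]
  have := congrArg (fun b => b.val.2) (@hinj b ⟨_, hb'⟩ (Prod.ext rfl (hσb.trans hσb'.symm)))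
  dsimp only at this
  omega

lemma fst_apply_lt_of_injective {k : ℕ}
    (hrows : ∀ p, (row D p).Nonempty ↔ 1 ≤ p ∧ p ≤ k) (hconvex : RowConvex D)
    (hrmono : ∀ p q, 1 ≤ p → p ≤ q → q ≤ k → rRow D q ≤ rRow D p)
    (hmax : MaxViolation D i) (hperm : StepBOk D i) (hL : lRow D i = L)
    (hσC : ∀ b, (σ b).val.2 = b.val.2)
    (hinj : Function.Injective fun b => (b.val.1, stepBCol D i (σ b).val))
    {b : {x : ℕ × ℕ // x ∈ D}} (hcol : b.val.2 = L) (hb : b.val.1 < i) :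
    (σ b).val.1 < i := by
  by_contra! hi
  have hbk : 1 ≤ b.val.1 ∧ b.val.1 ≤ k := (hrows _).1 ⟨_, mem_row.2 b.2⟩
  have hσbk : 1 ≤ (σ b).val.1 ∧ (σ b).val.1 ≤ k := (hrows _).1 ⟨_, mem_row.2 (σ b).2⟩
  have h1 := rRow_le_rRow_apply_of_injective hconvex hmax hL hσC hinj hcol hi
  have h2 := hrmono b.val.1 (i - 1) hbk.1 (by omega) (by have := hmax.1.1; omega)
  have h3 := hrmono i (σ b).val.1 (by have := hmax.1.1; omega) hi hσbk.2
  have h4 := rRow_lt_rRow_of_stepBOk hrows hperm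
  omega

theorem stepBCol_apply_eq_of_injective {k : ℕ}
    (hrows : ∀ p, (row D p).Nonempty ↔ 1 ≤ p ∧ p ≤ k) (hconvex : RowConvex D)
    (hrmono : ∀ p q, 1 ≤ p → p ≤ q → q ≤ k → rRow D q ≤ rRow D p)
    (hmax : MaxViolation D i) (hperm : StepBOk D i) (hσC : ∀ b, (σ b).val.2 = b.val.2)
    (hinj : Function.Injective fun b => (b.val.1, stepBCol D i (σ b).val))
    (b : {x : ℕ × ℕ // x ∈ D}) : stepBCol D i (σ b).val = stepBCol D i b.val := by
  obtain ⟨L, hL⟩ := ENat.ne_top_iff_exists.1 hmax.1.2.ne_top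
  replace hL := hL.symm
  have fst_lt {b : {x // x ∈ D}} (hcol : b.val.2 = L) (hb : b.val.1 < i) : (σ b).val.1 < i :=
    fst_apply_lt_of_injective hrows hconvex hrmono hmax hperm hL hσC hinj hcol hb
  set low := Finset.univ.filter fun b : {x // x ∈ D} => b.val.2 = L ∧ b.val.1 < i
  set high := Finset.univ.filter fun b : {x // x ∈ D} => b.val.2 = L ∧ i ≤ b.val.1
  have mem_low (b) : b ∈ low ↔ b.val.2 = L ∧ b.val.1 < i := by simp [low]
  have mem_high (b) : b ∈ high ↔ b.val.2 = L ∧ i ≤ b.val.1 := by simp [high]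
  have hlow : ∀ b ∈ low, σ b ∈ low := fun b hb => by
    rw [mem_low] at hb ⊢
    exact ⟨(hσC b).trans hb.1, fst_lt hb.1 hb.2⟩
  have hhigh : ∀ b ∈ high, σ b ∈ high := fun b hb => by
    rw [mem_high] at hb ⊢
    refine ⟨(hσC b).trans hb.1, not_lt.1 fun hσb => ?_⟩
    have := (mem_low b).1 (σ.mem_of_apply_mem hlow ((mem_low _).2 ⟨(hσC b).trans hb.1, hσb⟩))
    omega
  have hr : ∀ b ∈ high, rRow D b.val.1 = rRow D (σ b).val.1 :=
    σ.apply_eq_of_le_apply hhigh fun b hb =>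
      rRow_le_rRow_apply_of_injective hconvex hmax hL hσC hinj ((mem_high b).1 hb).1
        ((mem_high _).1 (hhigh b hb)).2
  rcases eq_or_ne b.val.2 L with hcol | hcol
  · rcases lt_or_ge b.val.1 i with hb | hb
    · rw [stepBCol_of_fst_lt hb, stepBCol_of_fst_lt (fst_lt hcol hb), hσC]
    · have hbh := (mem_high b).2 ⟨hcol, hb⟩
      obtain ⟨hσcol, hσb⟩ := (mem_high _).1 (hhigh b hbh)
      rw [stepBCol_of_snd_eq hmax hL (σ b).2 hσb hσcol, stepBCol_of_snd_eq hmax hL b.2 hb hcol,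
        hr b hbh]
  · rw [stepBCol_of_snd_ne hL (by rwa [hσC]), stepBCol_of_snd_ne hL hcol, hσC]

end Diagram

theorem statement14_general (D DB : Dg) (k i : ℕ) (hAS : AlmostSkew D k)
    (hmax : MaxViolation D i) (hperm : StepBOk D i)
    (ψ : {x : ℕ × ℕ // x ∈ D} ≃ {x : ℕ × ℕ // x ∈ DB})
    (hψ : ∀ b : {x : ℕ × ℕ // x ∈ D},
      (ψ b).val =
        if i ≤ b.val.1 ∧ lRow D b.val.1 = lRow D i ∧ (b.val.2 : ℕ∞) = lRow D b.val.1
        then (b.val.1, rRow D b.val.1 + 1) else b.val)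
    (σ : Equiv.Perm {x : ℕ × ℕ // x ∈ D})
    (hσC : ∀ b, (σ b).val.2 = b.val.2)
    (hσCB : ¬ ∀ b, (ψ (σ b)).val.2 = (ψ b).val.2) :
    Csum (fun b : {x : ℕ × ℕ // x ∈ D} => (ψ b).val.2) * MonoidAlgebra.single σ (1 : ℂ) *
      Rsum (fun b : {x : ℕ × ℕ // x ∈ D} => b.val.1) = 0 := by
  have hψcol : ∀ b, (ψ b).val.2 = stepBCol D i b.val := fun b => by
    rw [hψ b, stepBCol]
    split_ifs <;> rfl
  simp only [hψcol] at hσCB ⊢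
  obtain ⟨b₁, b₂, hb, hne⟩ := Function.not_injective_iff.1 fun hinj =>
    hσCB (stepBCol_apply_eq_of_injective hAS.1 hAS.2.1 hAS.2.2.1 hmax hperm hσC hinj)
  exact Csum_mul_single_mul_Rsum_eq_zero _ _ σ hne (Prod.mk.inj hb).1 (Prod.mk.inj hb).2

/-- With `D` almost skew, `i` the maximum violating index, Step B
permitted at `i`, `D^B` the result and `ψ` the canonical row-preserving bijection, for
every `σ ∈ C_D \ C_{D^B}` we have `C(D^B) · σ · R(D) = 0` in `ℂ[Σ_D]`. -/
theorem statement14 (D DB : Dg) (k i : ℕ) (hAS : AlmostSkew D k)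
    (hmax : MaxViolation D i) (hperm : StepBOk D i) (hstep : IsStepB D DB i)
    (ψ : {x : ℕ × ℕ // x ∈ D} ≃ {x : ℕ × ℕ // x ∈ DB})
    (hψ : ∀ b : {x : ℕ × ℕ // x ∈ D},
      (ψ b).val =
        if i ≤ b.val.1 ∧ lRow D b.val.1 = lRow D i ∧ (b.val.2 : ℕ∞) = lRow D b.val.1
        then (b.val.1, rRow D b.val.1 + 1) else b.val)
    (σ : Equiv.Perm {x : ℕ × ℕ // x ∈ D})
    (hσC : ∀ b, (σ b).val.2 = b.val.2)
    (hσCB : ¬ ∀ b, (ψ (σ b)).val.2 = (ψ b).val.2) :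
    Csum (fun b : {x : ℕ × ℕ // x ∈ D} => (ψ b).val.2) * MonoidAlgebra.single σ (1 : ℂ) *
      Rsum (fun b : {x : ℕ × ℕ // x ∈ D} => b.val.1) = 0 :=
  statement14_general D DB k i hAS hmax hperm ψ hψ σ hσC hσCB
end
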